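/- arXiv:1405.0449 — 2 statements merged into one kernel-verified Lean document; each statement's English description precedes it below -/
import Mathlib

section
/- Let Ω ⊂ ℝ^N be open and bounded and let f : cl(Ω) × ℝ^{M×N} → ℝ satisfy (f:0)–(f:2). Then there exists a bounded, non-increasing function μ : [0,∞) → [0,∞) with lim_{t→+∞} μ(t) = 0 such that |f(x,ξ) − f^∞(x,ξ)| ≤ μ(|ξ|)(1 + |ξ|) for every (x,ξ) ∈ cl(Ω) × ℝ^{M×N}. -/
open MeasureTheory Set Filter Topology Metric Function
open scoped RealInnerProductSpace ENNReal NNReal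

noncomputable section

/-- Euclidean space `ℝ^N`. -/
abbrev Euc (N : ℕ) : Type := EuclideanSpace ℝ (Fin N)

/-- The space of `M × N` real matrices, with the Frobenius (Euclidean) norm. -/
abbrev Mtx (M N : ℕ) : Type := EuclideanSpace ℝ (Fin M × Fin N)

/-- The matrix of a continuous linear map `ℝ^N → ℝ^M`. -/
def matOf {N M : ℕ} (L : Euc N →L[ℝ] Euc M) : Mtx M N :=
  (EuclideanSpace.equiv (Fin M × Fin N) ℝ).symm fun p => L (EuclideanSpace.single p.2 1) p.1

/-- The gradient (Jacobian) matrix of `φ : ℝ^N → ℝ^M` at `x`. -/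
def gradMat {N M : ℕ} (φ : Euc N → Euc M) (x : Euc N) : Mtx M N := matOf (fderiv ℝ φ x)

/-- An `ℝ^{M×N}`-valued measure, recorded in its Lebesgue-decomposed polar form:
an absolutely continuous density `ac` with respect to Lebesgue measure, together with the
total variation `svar` of the singular part and its polar density `spolar`. -/
structure MatMeas (N M : ℕ) where
  ac : Euc N → Mtx M N
  svar : Measure (Euc N)
  spolar : Euc N → Mtx M N

namespace MatMeas

variable {N M : ℕ}

/-- The value of the measure on a set `A` (relative to the domain `Ω`). -/
def apply (μ : MatMeas N M) (Ω A : Set (Euc N)) : Mtx M N :=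
  (∫ x in A ∩ Ω, μ.ac x) + ∫ x in A, μ.spolar x ∂μ.svar

/-- The total variation measure `|μ|` (relative to the domain `Ω`). -/
def tvar (μ : MatMeas N M) (Ω : Set (Euc N)) : Measure (Euc N) :=
  (volume.restrict Ω).withDensity (fun x => (‖μ.ac x‖₊ : ℝ≥0∞)) + μ.svar

/-- `μ` is a finite (Radon) matrix-valued measure on `Ω`. -/
structure IsFinite (μ : MatMeas N M) (Ω : Set (Euc N)) : Prop where
  ac_int : IntegrableOn μ.ac Ω volume
  svar_fin : μ.svar Set.univ < ⊤
  svar_sing : Measure.MutuallySingular μ.svar (volume : Measure (Euc N))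
  svar_supp : μ.svar Ωᶜ = 0
  spolar_norm : ∀ᵐ x ∂μ.svar, ‖μ.spolar x‖ = 1

/-- Integration of a scalar test function against the matrix-valued measure. -/
def pair (μ : MatMeas N M) (Ω : Set (Euc N)) (g : Euc N → ℝ) : Mtx M N :=
  (∫ x in Ω, g x • μ.ac x) + ∫ x, g x • μ.spolar x ∂μ.svar

end MatMeas

/-- Data of a function of bounded variation on a domain in `ℝ^N`: the function `u` together with
its distributional derivative `Du`, recorded as a matrix-valued measure `D`
(`D.ac = ∇u` is the approximate gradient, `D.svar = |D^s u|` and `D.spolar = dDu/d|Du|`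
on the singular part). -/
structure BVData (N M : ℕ) where
  u : Euc N → Euc M
  D : MatMeas N M

/-- `w` is a function of bounded variation on the open set `Ω`; the integration by parts
formula `ibp` states that `w.D` really is the distributional derivative of `w.u` in `Ω`. -/
structure IsBV {N M : ℕ} (Ω : Set (Euc N)) (w : BVData N M) : Prop where
  u_int : IntegrableOn w.u Ω volume
  D_fin : w.D.IsFinite Ω
  ibp : ∀ φ : Euc N → ℝ, ContDiff ℝ (⊤ : ℕ∞) φ → HasCompactSupport φ → tsupport φ ⊆ Ω →
    ∀ i : Fin M, ∀ j : Fin N,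
      (∫ x in Ω, w.u x i * fderiv ℝ φ x (EuclideanSpace.single j 1)) =
        - ((∫ x in Ω, φ x * w.D.ac x (i, j)) + ∫ x, φ x * w.D.spolar x (i, j) ∂w.D.svar)

/-- The zero BV function. -/
def zeroBV (N M : ℕ) : BVData N M := ⟨fun _ => 0, ⟨fun _ => 0, 0, fun _ => 0⟩⟩

/-- Extension of `w` by zero outside `Ω` (keeping the same derivative data). -/
def zeroExtend {N M : ℕ} (Ω : Set (Euc N)) (w : BVData N M) : BVData N M :=
  ⟨Ω.indicator w.u, ⟨Ω.indicator w.D.ac, w.D.svar, w.D.spolar⟩⟩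

/-- `w` has vanishing trace on `∂Ω`: its extension by zero is BV on all of `ℝ^N` with
no additional contribution to the derivative on `∂Ω`. -/
def ZeroTrace {N M : ℕ} (Ω : Set (Euc N)) (w : BVData N M) : Prop :=
  IsBV Set.univ (zeroExtend Ω w)

/-- Weak* convergence in `BV(Ω;ℝ^M)`: `L¹(Ω)` convergence of the functions together with
weak* convergence of the derivative measures against `C_c(Ω)` test functions. -/
def WeakStarTo {N M : ℕ} (Ω : Set (Euc N)) (un : ℕ → BVData N M) (u : BVData N M) : Prop :=
  Tendsto (fun n => ∫ x in Ω, ‖(un n).u x - u.u x‖) atTop (𝓝 (0 : ℝ)) ∧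
  ∀ g : Euc N → ℝ, Continuous g → HasCompactSupport g → tsupport g ⊆ Ω →
    Tendsto (fun n => (un n).D.pair Ω g) atTop (𝓝 (u.D.pair Ω g))

/-- Boundedness of a sequence in the `BV(Ω)` norm. -/
def BVBounded {N M : ℕ} (Ω : Set (Euc N)) (u : ℕ → BVData N M) : Prop :=
  ∃ R : ℝ, ∀ n, (∫ x in Ω, ‖(u n).u x‖) + (((u n).D.tvar Ω) Set.univ).toReal ≤ R

/-- `Ω ∈ E(ℝ^N)`: every `BV(Ω;ℝ^M)`-bounded sequence has a subsequence converging
in `L¹(Ω;ℝ^M)` (compact embedding of `BV` into `L¹`). -/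
def CompactEmbeddingBV {N : ℕ} (Ω : Set (Euc N)) (M : ℕ) : Prop :=
  ∀ u : ℕ → BVData N M, (∀ n, IsBV Ω (u n)) → BVBounded Ω u →
    ∃ (φ : ℕ → ℕ) (v : Euc N → Euc M), StrictMono φ ∧
      Tendsto (fun k => ∫ x in Ω, ‖(u (φ k)).u x - v x‖) atTop (𝓝 (0 : ℝ))

/-- Hypotheses (f:0)–(f:2) on the integrand `f`, with recession function `finf`. -/
structure GoodIntegrand {N M : ℕ} (Ω : Set (Euc N)) (f finf : Euc N → Mtx M N → ℝ) : Prop where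
  cont : ContinuousOn (fun p : Euc N × Mtx M N => f p.1 p.2)
    ((closure Ω) ×ˢ (Set.univ : Set (Mtx M N)))
  growth : ∃ C : ℝ, 0 ≤ C ∧ ∀ x ∈ closure Ω, ∀ ξ : Mtx M N, |f x ξ| ≤ C * (‖ξ‖ + 1)
  rec_zero : ∀ x : Euc N, finf x 0 = 0
  rec_lim : ∀ x ∈ closure Ω, ∀ ξ : Mtx M N, ξ ≠ 0 →
    Tendsto (fun p : (Euc N × Mtx M N) × ℝ => f p.1.1 (p.2 • p.1.2) / p.2)
      (((𝓝[closure Ω] x) ×ˢ 𝓝 ξ) ×ˢ atTop) (𝓝 (finf x ξ))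

/-- The functional `F(u) = ∫_Ω f(x,∇u) dx + ∫_Ω f^∞(x, dDu/d|Du|) d|D^s u|`. -/
def BVIntegral {N M : ℕ} (Ω : Set (Euc N)) (f finf : Euc N → Mtx M N → ℝ)
    (w : BVData N M) : ℝ :=
  (∫ x in Ω, f x (w.D.ac x)) + ∫ x, finf x (w.D.spolar x) ∂w.D.svar

/-- The measure `𝐟(u) : A ↦ ∫_{A∩Ω} f(x,∇u) dx + ∫_A f^∞(x, dDu/d|Du|) d|D^s u|`. -/
def fMeas {N M : ℕ} (Ω : Set (Euc N)) (f finf : Euc N → Mtx M N → ℝ) (w : BVData N M)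
    (A : Set (Euc N)) : ℝ :=
  (∫ x in A ∩ Ω, f x (w.D.ac x)) + ∫ x in A, finf x (w.D.spolar x) ∂w.D.svar

/-- Sequential weak* lower semicontinuity of a functional on `BV(Ω;ℝ^M)`. -/
def WSLSC {N M : ℕ} (Ω : Set (Euc N)) (F : BVData N M → ℝ) : Prop :=
  ∀ (un : ℕ → BVData N M) (u : BVData N M),
    (∀ n, IsBV Ω (un n)) → IsBV Ω u → WeakStarTo Ω un u →
    ((F u : ℝ) : EReal) ≤ Filter.liminf (fun n => ((F (un n) : ℝ) : EReal)) Filter.atTop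

/-- Morrey quasiconvexity of `g` at the matrix `ξ` (tested with `W_0^{1,∞}` functions on
the unit ball, i.e. Lipschitz functions vanishing outside the open unit ball). -/
def QuasiconvexAt {N M : ℕ} (g : Mtx M N → ℝ) (ξ : Mtx M N) : Prop :=
  ∀ φ : Euc N → Euc M, (∃ c : ℝ≥0, LipschitzWith c φ) →
    (∀ x : Euc N, x ∉ ball (0 : Euc N) 1 → φ x = 0) →
    0 ≤ ∫ y in ball (0 : Euc N) 1, (g (ξ + gradMat φ y) - g ξ)

/-- `(v, G)` is a `W^{1,1}(A;ℝ^M)` function: `v, G` are integrable on `A` and `G` is the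
weak gradient of `v` in `A`. -/
structure IsW11 {N M : ℕ} (A : Set (Euc N)) (v : Euc N → Euc M)
    (G : Euc N → Mtx M N) : Prop where
  v_int : IntegrableOn v A volume
  G_int : IntegrableOn G A volume
  ibp : ∀ φ : Euc N → ℝ, ContDiff ℝ (⊤ : ℕ∞) φ → HasCompactSupport φ → tsupport φ ⊆ A →
    ∀ i : Fin M, ∀ j : Fin N,
      (∫ x in A, v x i * fderiv ℝ φ x (EuclideanSpace.single j 1)) =
        - ∫ x in A, φ x * G x (i, j)

/-- A test function for quasi-sublinear growth from below at `x₀` with radius `δ`: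
a `W^{1,1}(Ω ∩ B_δ(x₀);ℝ^M)` function vanishing near `∂B_δ(x₀)` (extended by zero). -/
def QSLBTest {N M : ℕ} (Ω : Set (Euc N)) (x₀ : Euc N) (δ : ℝ)
    (v : Euc N → Euc M) (G : Euc N → Mtx M N) : Prop :=
  IsW11 (Ω ∩ ball x₀ δ) v G ∧
    ∃ η : ℝ, 0 < η ∧ ∀ x : Euc N, δ - η < dist x x₀ → v x = 0 ∧ G x = 0

/-- `g` is of quasi-sublinear growth from below at `x₀`. -/
def QSLB {N M : ℕ} (Ω : Set (Euc N)) (g : Mtx M N → ℝ) (x₀ : Euc N) : Prop :=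
  ∀ ε : ℝ, 0 < ε → ∃ δ : ℝ, 0 < δ ∧ ∃ C : ℝ,
    ∀ (v : Euc N → Euc M) (G : Euc N → Mtx M N), QSLBTest Ω x₀ δ v G →
      -ε * (∫ x in Ω ∩ ball x₀ δ, ‖G x‖) - C ≤ ∫ x in Ω ∩ ball x₀ δ, g (G x)

/-- Quasi-sublinear growth from below with constant `C = 0` (variant for the
recession function, frozen at `x₀`). -/
def QSLB0 {N M : ℕ} (Ω : Set (Euc N)) (g : Mtx M N → ℝ) (x₀ : Euc N) : Prop :=
  ∀ ε : ℝ, 0 < ε → ∃ δ : ℝ, 0 < δ ∧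
    ∀ (v : Euc N → Euc M) (G : Euc N → Mtx M N), QSLBTest Ω x₀ δ v G →
      -ε * (∫ x in Ω ∩ ball x₀ δ, ‖G x‖) ≤ ∫ x in Ω ∩ ball x₀ δ, g (G x)

/-- The "unfrozen" quasi-sublinear growth from below at `x₀`, where the integrand is
evaluated at the variable of integration. -/
def QSLBUnfrozen {N M : ℕ} (Ω : Set (Euc N)) (f : Euc N → Mtx M N → ℝ) (x₀ : Euc N) : Prop :=
  ∀ ε : ℝ, 0 < ε → ∃ δ : ℝ, 0 < δ ∧ ∃ C : ℝ, 0 ≤ C ∧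
    ∀ (v : Euc N → Euc M) (G : Euc N → Mtx M N), QSLBTest Ω x₀ δ v G →
      -ε * (∫ x in Ω ∩ ball x₀ δ, ‖G x‖) - C ≤ ∫ x in Ω ∩ ball x₀ δ, f x (G x)

/-- A `W_0^{1,1}(B_1(0);ℝ^M)` test function (vanishing near the boundary sphere,
extended by zero). -/
def W01Test {N M : ℕ} (φ : Euc N → Euc M) (G : Euc N → Mtx M N) : Prop :=
  IsW11 (ball (0 : Euc N) 1) φ G ∧
    ∃ η : ℝ, 0 < η ∧ ∀ x : Euc N, 1 - η < ‖x‖ → φ x = 0 ∧ G x = 0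

/-- The half ball `D_ν = {y ∈ B_1(0) : y·ν < 0}`. -/
def halfBall {N : ℕ} (ν : Euc N) : Set (Euc N) :=
  {y : Euc N | y ∈ ball (0 : Euc N) 1 ∧ ⟪y, ν⟫ < 0}

/-- Condition (qslb-limit2): `∫_{D_ν} g(∇φ) ≥ 0` for all `φ ∈ W_0^{1,1}(B_1(0);ℝ^M)`. -/
def HalfBallNonneg {N M : ℕ} (g : Mtx M N → ℝ) (ν : Euc N) : Prop :=
  ∀ (φ : Euc N → Euc M) (G : Euc N → Mtx M N), W01Test φ G →
    0 ≤ ∫ y in halfBall ν, g (G y)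

/-- Condition (qslb-limit1): for every `ε > 0` there is `C ≥ 0` with
`∫_{D_ν} g(∇φ) ≥ -ε ∫_{D_ν} |∇φ| - C` for all `φ ∈ W_0^{1,1}(B_1(0);ℝ^M)`. -/
def HalfBallQSLB {N M : ℕ} (g : Mtx M N → ℝ) (ν : Euc N) : Prop :=
  ∀ ε : ℝ, 0 < ε → ∃ C : ℝ, 0 ≤ C ∧
    ∀ (φ : Euc N → Euc M) (G : Euc N → Mtx M N), W01Test φ G →
      -ε * (∫ y in halfBall ν, ‖G y‖) - C ≤ ∫ y in halfBall ν, g (G y)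

/-- `∂Ω` is of class `C¹` near `x₀`, with outer unit normal `ν` at `x₀`. -/
def HasC1BoundaryAt {N : ℕ} (Ω : Set (Euc N)) (x₀ : Euc N) (ν : Euc N) : Prop :=
  x₀ ∈ frontier Ω ∧ ‖ν‖ = 1 ∧
  ∃ (U : Set (Euc N)) (g : Euc N → ℝ), IsOpen U ∧ x₀ ∈ U ∧ ContDiff ℝ 1 g ∧
    (∀ x ∈ U, gradient g x ≠ 0) ∧ (Ω ∩ U = {x ∈ U | g x < 0}) ∧
    ν = ‖gradient g x₀‖⁻¹ • gradient g x₀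

/-- `Ω` has Lipschitz boundary: near each boundary point, `Ω` is the subgraph of a
Lipschitz function in a suitable direction. -/
def IsLipschitzBoundary {N : ℕ} (Ω : Set (Euc N)) : Prop :=
  ∀ x₀ ∈ frontier Ω, ∃ (ν : Euc N) (U : Set (Euc N)) (ψ : Euc N → ℝ) (c : ℝ≥0),
    ‖ν‖ = 1 ∧ IsOpen U ∧ x₀ ∈ U ∧ LipschitzWith c ψ ∧
    Ω ∩ U = {x ∈ U | ⟪x, ν⟫ < ψ (x - ⟪x, ν⟫ • ν)}

/-- The sequence of measures `μ n` does not charge the set `K` (relative to `Ω`). -/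
def DoesNotCharge {N : ℕ} (Ω : Set (Euc N)) (μ : ℕ → Measure (Euc N))
    (K : Set (Euc N)) : Prop :=
  Tendsto (fun δ : ℝ => ⨆ n, μ n (Metric.thickening δ K ∩ Ω)) (𝓝[>] (0 : ℝ))
    (𝓝 (0 : ℝ≥0∞))

/-- Total variation of a (vector-valued, finitely additive) set function: supremum over
countable disjoint measurable families of the sums of norms of the values. -/
def setFnTV {α : Type*} [MeasurableSpace α] {X : Type*} [NormedAddCommGroup X]
    (m : Set α → X) : ℝ≥0∞ :=
  ⨆ (P : ℕ → Set α) (_ : ∀ n, MeasurableSet (P n)) (_ : Pairwise (Function.onFun Disjoint P)),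
    ∑' n, (‖m (P n)‖₊ : ℝ≥0∞)

/-- The (topological) support of a measure. -/
def msupport {α : Type*} [TopologicalSpace α] [MeasurableSpace α] (μ : Measure α) : Set α :=
  {x | ∀ U ∈ 𝓝 x, 0 < μ U}

/-- `s` represents the sum `u + w` in `BV(Ω;ℝ^M)`. -/
def RepresentsSum {N M : ℕ} (Ω : Set (Euc N)) (s u w : BVData N M) : Prop :=
  (∀ᵐ x ∂(volume.restrict Ω), s.u x = u.u x + w.u x) ∧
  ∀ A : Set (Euc N), MeasurableSet A → s.D.apply Ω A = u.D.apply Ω A + w.D.apply Ω A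

section AuxStmt9

variable {N M : ℕ} {Ω : Set (Euc N)} {f finf : Euc N → Mtx M N → ℝ}

/-- Pointwise form of the recession limit: frozen `x` and `ξ`. -/
lemma auxA0 (hf : GoodIntegrand Ω f finf) {x : Euc N} (hx : x ∈ closure Ω)
    {ξ : Mtx M N} (hξ : ξ ≠ 0) :
    Tendsto (fun t : ℝ => f x (t • ξ) / t) atTop (𝓝 (finf x ξ)) := by
  have hc : Tendsto (fun t : ℝ => ((x, ξ), t)) atTop
      (((𝓝[closure Ω] x) ×ˢ 𝓝 ξ) ×ˢ atTop) :=
    ((tendsto_const_pure.mono_right (pure_le_nhdsWithin hx)).prodMk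
      tendsto_const_nhds).prodMk tendsto_id
  exact (hf.rec_lim x hx ξ hξ).comp hc

/-- Linear growth of the recession function. -/
lemma auxA (hf : GoodIntegrand Ω f finf) {C : ℝ} (hC0 : 0 ≤ C)
    (hC : ∀ x ∈ closure Ω, ∀ ξ : Mtx M N, |f x ξ| ≤ C * (‖ξ‖ + 1))
    {x : Euc N} (hx : x ∈ closure Ω) (ξ : Mtx M N) :
    |finf x ξ| ≤ C * ‖ξ‖ := by
  rcases eq_or_ne ξ 0 with rfl | hξ
  · simp [hf.rec_zero x]
  · have h1 : Tendsto (fun t : ℝ => |f x (t • ξ) / t|) atTop (𝓝 |finf x ξ|) :=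
      (auxA0 hf hx hξ).abs
    have h2 : Tendsto (fun t : ℝ => C * ‖ξ‖ + C / t) atTop (𝓝 (C * ‖ξ‖)) := by
      have hz : Tendsto (fun t : ℝ => C / t) atTop (𝓝 0) :=
        Tendsto.div_atTop tendsto_const_nhds tendsto_id
      simpa using (tendsto_const_nhds (x := C * ‖ξ‖) (f := atTop)).add hz
    refine le_of_tendsto_of_tendsto h1 h2 ?_
    filter_upwards [eventually_gt_atTop (0 : ℝ)] with t ht
    have ht' : |t| = t := abs_of_pos ht
    have hb := hC x hx (t • ξ)
    rw [norm_smul, Real.norm_eq_abs, ht'] at hb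
    rw [abs_div, ht']
    rw [div_le_iff₀ ht]
    calc |f x (t • ξ)| ≤ C * (t * ‖ξ‖ + 1) := hb
      _ = (C * ‖ξ‖ + C / t) * t := by field_simp

/-- Positive 1-homogeneity of the recession function. -/
lemma auxB (hf : GoodIntegrand Ω f finf) {x : Euc N} (hx : x ∈ closure Ω)
    {ξ : Mtx M N} (hξ : ξ ≠ 0) {s : ℝ} (hs : 0 < s) :
    finf x (s • ξ) = s * finf x ξ := by
  have h1 : Tendsto (fun t : ℝ => f x (t • s • ξ) / t) atTop (𝓝 (finf x (s • ξ))) :=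
    auxA0 hf hx (smul_ne_zero hs.ne' hξ)
  have h3 : Tendsto (fun t : ℝ => f x ((t * s) • ξ) / (t * s)) atTop (𝓝 (finf x ξ)) :=
    (auxA0 hf hx hξ).comp (tendsto_id.atTop_mul_const hs)
  have h4 : Tendsto (fun t : ℝ => f x (t • s • ξ) / t) atTop (𝓝 (s * finf x ξ)) := by
    refine (h3.const_mul s).congr' ?_
    filter_upwards [eventually_gt_atTop (0 : ℝ)] with t ht
    rw [smul_smul]
    have ht' : t ≠ 0 := ht.ne'
    have hs' : s ≠ 0 := hs.ne'
    field_simp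
  exact tendsto_nhds_unique h1 h4

/-- Sequential continuity of the recession function on `closure Ω × (Mtx ∖ {0})`. -/
lemma auxC (hf : GoodIntegrand Ω f finf) {x : Euc N} (hx : x ∈ closure Ω)
    {η : Mtx M N} (hη : η ≠ 0) {xs : ℕ → Euc N} {ηs : ℕ → Mtx M N}
    (hxs : ∀ k, xs k ∈ closure Ω) (hηs : ∀ k, ηs k ≠ 0)
    (hxl : Tendsto xs atTop (𝓝 x)) (hηl : Tendsto ηs atTop (𝓝 η)) :
    Tendsto (fun k => finf (xs k) (ηs k)) atTop (𝓝 (finf x η)) := by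
  have hsel : ∀ k : ℕ, ∃ t : ℝ, (k : ℝ) ≤ t ∧
      |f (xs k) (t • ηs k) / t - finf (xs k) (ηs k)| < 1 / (k + 1) := by
    intro k
    have hpos : (0 : ℝ) < 1 / ((k : ℝ) + 1) := by positivity
    have hev : ∀ᶠ t : ℝ in atTop,
        |f (xs k) (t • ηs k) / t - finf (xs k) (ηs k)| < 1 / (k + 1) := by
      have := (auxA0 hf (hxs k) (hηs k)).eventually (Metric.ball_mem_nhds _ hpos)
      filter_upwards [this] with t ht
      simpa [Real.dist_eq] using ht
    exact ((eventually_ge_atTop ((k : ℝ))).and hev).exists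
  choose s hs1 hs2 using hsel
  have hsl : Tendsto s atTop atTop :=
    tendsto_atTop_mono hs1 tendsto_natCast_atTop_atTop
  have hxw : Tendsto xs atTop (𝓝[closure Ω] x) :=
    tendsto_nhdsWithin_of_tendsto_nhds_of_eventually_within xs hxl
      (Eventually.of_forall hxs)
  have hmap : Tendsto (fun k => ((xs k, ηs k), s k)) atTop
      (((𝓝[closure Ω] x) ×ˢ 𝓝 η) ×ˢ atTop) :=
    (hxw.prodMk hηl).prodMk hsl
  have hq : Tendsto (fun k => f (xs k) (s k • ηs k) / s k) atTop (𝓝 (finf x η)) :=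
    (hf.rec_lim x hx η hη).comp hmap
  have hdiff : Tendsto
      (fun k => f (xs k) (s k • ηs k) / s k - finf (xs k) (ηs k)) atTop (𝓝 0) := by
    refine squeeze_zero_norm (fun k => ?_) tendsto_one_div_add_atTop_nhds_zero_nat
    exact (le_of_lt (by simpa [Real.norm_eq_abs] using hs2 k))
  have := hq.sub hdiff
  simpa using this.congr (fun k => by ring)

end AuxStmt9

theorem stmt9 {N M : ℕ} (hN : 0 < N) (hM : 0 < M) (Ω : Set (Euc N))
    (hΩo : IsOpen Ω) (hΩb : Bornology.IsBounded Ω)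
    (f finf : Euc N → Mtx M N → ℝ) (hf : GoodIntegrand Ω f finf) :
    ∃ μ : ℝ → ℝ, (∀ t : ℝ, 0 ≤ μ t) ∧ (∃ K : ℝ, ∀ t : ℝ, μ t ≤ K) ∧
      AntitoneOn μ (Ici (0 : ℝ)) ∧ Tendsto μ atTop (𝓝 (0 : ℝ)) ∧
      ∀ x ∈ closure Ω, ∀ ξ : Mtx M N, |f x ξ - finf x ξ| ≤ μ ‖ξ‖ * (1 + ‖ξ‖) := by
  classical
  obtain ⟨C, hC0, hC⟩ := hf.growth
  rcases (closure Ω).eq_empty_or_nonempty with hemp | ⟨x₀, hx₀⟩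
  · refine ⟨fun _ => 0, fun t => le_refl 0, ⟨0, fun t => le_refl 0⟩,
      fun a _ b _ _ => le_refl 0, tendsto_const_nhds, fun x hx => ?_⟩
    rw [hemp] at hx
    exact absurd hx (notMem_empty x)
  set S : ℝ → Set ℝ := fun t =>
    {r | ∃ x ∈ closure Ω, ∃ ξ : Mtx M N, t ≤ ‖ξ‖ ∧
      r = |f x ξ - finf x ξ| / (1 + ‖ξ‖)} with hSdef
  have hnorm1 : ∀ ξ : Mtx M N, (0 : ℝ) < 1 + ‖ξ‖ := fun ξ => by positivity
  have hub : ∀ t : ℝ, ∀ r ∈ S t, r ≤ 2 * C := by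
    rintro t r ⟨x, hx, ξ, -, rfl⟩
    rw [div_le_iff₀ (hnorm1 ξ)]
    have h1 := hC x hx ξ
    have h2 := auxA hf hC0 hC hx ξ
    have h3 : (0 : ℝ) ≤ ‖ξ‖ := norm_nonneg _
    calc |f x ξ - finf x ξ| ≤ |f x ξ| + |finf x ξ| := abs_sub _ _
      _ ≤ C * (‖ξ‖ + 1) + C * ‖ξ‖ := add_le_add h1 h2
      _ ≤ 2 * C * (1 + ‖ξ‖) := by nlinarith
  have hne : ∀ t : ℝ, (S t).Nonempty := by
    intro t
    set ξ : Mtx M N :=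
      (max t 0 + 1) • EuclideanSpace.single (⟨0, hM⟩, ⟨0, hN⟩) (1 : ℝ) with hξdef
    have hmax : (0 : ℝ) < max t 0 + 1 := by positivity
    have hnξ : ‖ξ‖ = max t 0 + 1 := by
      rw [hξdef, norm_smul, EuclideanSpace.norm_single]
      simp [Real.norm_eq_abs, abs_of_pos hmax]
    refine ⟨_, x₀, hx₀, ξ, ?_, rfl⟩
    rw [hnξ]
    calc t ≤ max t 0 := le_max_left t 0
      _ ≤ max t 0 + 1 := by linarith
  have hbdd : ∀ t : ℝ, BddAbove (S t) := fun t => ⟨2 * C, fun r hr => hub t r hr⟩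
  have hnonneg : ∀ t : ℝ, 0 ≤ sSup (S t) := by
    intro t
    obtain ⟨r, hr⟩ := hne t
    refine le_csSup_of_le (hbdd t) hr ?_
    obtain ⟨x, hx, ξ, -, rfl⟩ := hr
    positivity
  have hmono : Antitone (fun t => sSup (S t)) := by
    intro a b hab
    refine csSup_le_csSup (hbdd a) (hne b) ?_
    rintro r ⟨x, hx, ξ, hb, rfl⟩
    exact ⟨x, hx, ξ, hab.trans hb, rfl⟩
  -- Main claim: the modulus goes to zero
  have claimD : ∀ ε : ℝ, 0 < ε → ∃ T : ℝ, ∀ x ∈ closure Ω, ∀ ξ : Mtx M N,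
      T ≤ ‖ξ‖ → |f x ξ - finf x ξ| ≤ ε * (1 + ‖ξ‖) := by
    intro ε hε
    by_contra hcon
    push_neg at hcon
    choose xs hxs ξs hξn hξlt using fun n : ℕ => hcon ((n : ℝ) + 1)
    have htpos : ∀ n, (0 : ℝ) < ‖ξs n‖ := fun n =>
      lt_of_lt_of_le (by positivity) (hξn n)
    set η : ℕ → Mtx M N := fun n => ‖ξs n‖⁻¹ • ξs n with hηdef
    have hηnorm : ∀ n, ‖η n‖ = 1 := by
      intro n
      rw [hηdef]
      simp only [norm_smul, Real.norm_eq_abs, abs_of_pos (inv_pos.2 (htpos n))]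
      exact inv_mul_cancel₀ (htpos n).ne'
    have hηne : ∀ n, η n ≠ 0 := by
      intro n h0
      have := hηnorm n
      rw [h0] at this
      simp at this
    have hK : IsCompact ((closure Ω) ×ˢ (sphere (0 : Mtx M N) 1)) :=
      (Metric.isCompact_of_isClosed_isBounded isClosed_closure hΩb.closure).prod
        (isCompact_sphere 0 1)
    have hmemK : ∀ n, (xs n, η n) ∈ (closure Ω) ×ˢ sphere (0 : Mtx M N) 1 :=
      fun n => ⟨hxs n, by rw [mem_sphere_zero_iff_norm]; exact hηnorm n⟩
    obtain ⟨a, haK, φ, hφ, hconv⟩ := hK.tendsto_subseq hmemK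
    have ha1 : a.1 ∈ closure Ω := haK.1
    have ha2 : ‖a.2‖ = 1 := by
      have := haK.2
      rwa [mem_sphere_zero_iff_norm] at this
    have ha2ne : a.2 ≠ 0 := by
      intro h0
      rw [h0] at ha2
      simp at ha2
    have hxl : Tendsto (fun k => xs (φ k)) atTop (𝓝 a.1) :=
      (continuous_fst.tendsto a).comp hconv
    have hηl : Tendsto (fun k => η (φ k)) atTop (𝓝 a.2) :=
      (continuous_snd.tendsto a).comp hconv
    have hr : Tendsto (fun k => finf (xs (φ k)) (η (φ k))) atTop (𝓝 (finf a.1 a.2)) :=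
      auxC hf ha1 ha2ne (fun k => hxs _) (fun k => hηne _) hxl hηl
    have hsl : Tendsto (fun k => ‖ξs (φ k)‖) atTop atTop := by
      refine tendsto_atTop_mono (fun k => ?_) tendsto_natCast_atTop_atTop
      calc (k : ℝ) ≤ (φ k : ℝ) := by exact_mod_cast hφ.le_apply
        _ ≤ (φ k : ℝ) + 1 := by linarith
        _ ≤ ‖ξs (φ k)‖ := hξn _
    have hmap : Tendsto (fun k => ((xs (φ k), η (φ k)), ‖ξs (φ k)‖)) atTop
        (((𝓝[closure Ω] a.1) ×ˢ 𝓝 a.2) ×ˢ atTop) :=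
      ((tendsto_nhdsWithin_of_tendsto_nhds_of_eventually_within _ hxl
        (Eventually.of_forall (fun k => hxs _))).prodMk hηl).prodMk hsl
    have hq : Tendsto (fun k => f (xs (φ k)) (ξs (φ k)) / ‖ξs (φ k)‖) atTop
        (𝓝 (finf a.1 a.2)) := by
      refine ((hf.rec_lim a.1 ha1 a.2 ha2ne).comp hmap).congr (fun k => ?_)
      show f (xs (φ k)) (‖ξs (φ k)‖ • η (φ k)) / ‖ξs (φ k)‖ = _
      rw [hηdef]
      rw [smul_inv_smul₀ (htpos (φ k)).ne']
    have h0 : Tendsto (fun k =>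
        |f (xs (φ k)) (ξs (φ k)) / ‖ξs (φ k)‖ - finf (xs (φ k)) (η (φ k))|) atTop
        (𝓝 0) := by
      simpa using (hq.sub hr).abs
    obtain ⟨k, hk⟩ := (h0.eventually (gt_mem_nhds hε)).exists
    set t := ‖ξs (φ k)‖ with htdef
    have ht : 0 < t := htpos _
    have hfin : finf (xs (φ k)) (ξs (φ k)) = t * finf (xs (φ k)) (η (φ k)) := by
      rw [← auxB hf (hxs (φ k)) (hηne (φ k)) ht]
      congr 1
      rw [hηdef]
      exact (smul_inv_smul₀ ht.ne' _).symm
    have hlt := hξlt (φ k)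
    rw [hfin] at hlt
    have heq : |f (xs (φ k)) (ξs (φ k)) - t * finf (xs (φ k)) (η (φ k))| =
        t * |f (xs (φ k)) (ξs (φ k)) / t - finf (xs (φ k)) (η (φ k))| := by
      have hX : f (xs (φ k)) (ξs (φ k)) - t * finf (xs (φ k)) (η (φ k)) =
          t * (f (xs (φ k)) (ξs (φ k)) / t - finf (xs (φ k)) (η (φ k))) := by
        field_simp
      rw [hX, abs_mul, abs_of_pos ht]
    rw [heq] at hlt
    nlinarith [abs_nonneg (f (xs (φ k)) (ξs (φ k)) / t - finf (xs (φ k)) (η (φ k))),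
      hk, ht, hε]
  refine ⟨fun t => sSup (S t), hnonneg, ⟨2 * C, fun t => csSup_le (hne t) (hub t)⟩,
    hmono.antitoneOn _, ?_, ?_⟩
  · rw [Metric.tendsto_atTop]
    intro ε hε
    obtain ⟨T, hT⟩ := claimD (ε / 2) (by linarith)
    refine ⟨T, fun t ht' => ?_⟩
    have hle : sSup (S t) ≤ ε / 2 := by
      refine csSup_le (hne t) ?_
      rintro r ⟨x, hx, ξ, hξ, rfl⟩
      rw [div_le_iff₀ (hnorm1 ξ)]
      exact hT x hx ξ (le_trans ht' hξ)
    rw [Real.dist_eq, abs_of_nonneg (by simpa using hnonneg t)]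
    simp only [sub_zero]
    linarith
  · intro x hx ξ
    have hm : |f x ξ - finf x ξ| / (1 + ‖ξ‖) ≤ sSup (S ‖ξ‖) :=
      le_csSup (hbdd ‖ξ‖) ⟨x, hx, ξ, le_rfl, rfl⟩
    rwa [div_le_iff₀ (hnorm1 ξ)] at hm

end
end

section
/- Let Ω ⊂ ℝ^N be open and bounded, k ≥ 1, and let g : cl(Ω) × ℝ^k → ℝ be continuous on cl(Ω) × S^{k−1} and positively 1-homogeneous in its second variable. Define G : M(Ω;ℝ^k) → ℝ by G(μ) := ∫_Ω g(x, (dμ/d|μ|)(x)) d|μ|(x). Then G is uniformly continuous on bounded sets with respect to convergence in total variation: for every pair of sequences (μ_n), (λ_n) ⊂ M(Ω;ℝ^k) with sup_n |μ_n|(Ω) < ∞ and sup_n |λ_n|(Ω) < ∞, if |μ_n − λ_n|(Ω) → 0 then G(μ_n) − G(λ_n) → 0. -/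
open MeasureTheory Set Filter Topology Metric Function
open scoped RealInnerProductSpace ENNReal NNReal

noncomputable section

section Aux

variable {N k : ℕ}

lemma g_zero (g : Euc N → EuclideanSpace ℝ (Fin k) → ℝ)
    (hgh : ∀ x : Euc N, ∀ α : ℝ, 0 ≤ α → ∀ ξ : EuclideanSpace ℝ (Fin k),
      g x (α • ξ) = α * g x ξ) (x : Euc N) : g x 0 = 0 := by
  have := hgh x 0 le_rfl 0
  simpa using this

lemma g_homval (g : Euc N → EuclideanSpace ℝ (Fin k) → ℝ)
    (hgh : ∀ x : Euc N, ∀ α : ℝ, 0 ≤ α → ∀ ξ : EuclideanSpace ℝ (Fin k),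
      g x (α • ξ) = α * g x ξ) (x : Euc N) (ξ : EuclideanSpace ℝ (Fin k)) (hξ : ξ ≠ 0) :
    g x ξ = ‖ξ‖ * g x (‖ξ‖⁻¹ • ξ) := by
  have h0 : ‖ξ‖ ≠ 0 := norm_ne_zero_iff.mpr hξ
  have := hgh x ‖ξ‖ (norm_nonneg ξ) (‖ξ‖⁻¹ • ξ)
  rwa [smul_smul, mul_inv_cancel₀ h0, one_smul] at this

lemma g_unif (Ω : Set (Euc N)) (hΩb : Bornology.IsBounded Ω)
    (g : Euc N → EuclideanSpace ℝ (Fin k) → ℝ)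
    (hgc : ContinuousOn (fun p : Euc N × EuclideanSpace ℝ (Fin k) => g p.1 p.2)
      ((closure Ω) ×ˢ Metric.sphere (0 : EuclideanSpace ℝ (Fin k)) 1))
    (hgh : ∀ x : Euc N, ∀ α : ℝ, 0 ≤ α → ∀ ξ : EuclideanSpace ℝ (Fin k),
      g x (α • ξ) = α * g x ξ)
    {ε : ℝ} (hε : 0 < ε) :
    ∃ L : ℝ, 0 ≤ L ∧ ∀ x ∈ closure Ω, ∀ ξ η : EuclideanSpace ℝ (Fin k),
      ‖ξ‖ ≤ 1 → ‖η‖ ≤ 1 → |g x ξ - g x η| ≤ ε + L * ‖ξ - η‖ := by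
  classical
  set K := closure Ω with hKdef
  have hK : IsCompact K := Metric.isCompact_of_isClosed_isBounded isClosed_closure hΩb.closure
  have hKS : IsCompact (K ×ˢ Metric.sphere (0 : EuclideanSpace ℝ (Fin k)) 1) :=
    hK.prod (isCompact_sphere 0 1)
  obtain ⟨C0, hC0⟩ := hKS.exists_bound_of_continuousOn hgc
  set C : ℝ := max C0 0 with hCdef
  have hC : ∀ x ∈ K, ∀ ζ : EuclideanSpace ℝ (Fin k), ‖ζ‖ = 1 → |g x ζ| ≤ C := by
    intro x hx ζ hζ
    have : ‖g x ζ‖ ≤ C0 := hC0 (x, ζ) (by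
      refine mem_prod.2 ⟨hx, ?_⟩
      simpa [mem_sphere_iff_norm] using hζ)
    exact le_trans (by simpa using this) (le_max_left _ _)
  have hCnn : 0 ≤ C := le_max_right _ _
  have hCball : ∀ x ∈ K, ∀ ξ : EuclideanSpace ℝ (Fin k), ‖ξ‖ ≤ 1 → |g x ξ| ≤ C := by
    intro x hx ξ hξ
    by_cases h0 : ξ = 0
    · simp [h0, g_zero g hgh, hCnn]
    · have hn : ‖ξ‖ ≠ 0 := norm_ne_zero_iff.mpr h0
      have hunit : ‖‖ξ‖⁻¹ • ξ‖ = 1 := by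
        rw [norm_smul, norm_inv, norm_norm, inv_mul_cancel₀ hn]
      rw [g_homval g hgh x ξ h0, abs_mul, abs_norm]
      calc ‖ξ‖ * |g x (‖ξ‖⁻¹ • ξ)| ≤ 1 * C := by
            exact mul_le_mul hξ (hC x hx _ hunit) (abs_nonneg _) zero_le_one
        _ = C := one_mul C
  -- continuity on K × closed ball
  have hcontB : ContinuousOn (fun p : Euc N × EuclideanSpace ℝ (Fin k) => g p.1 p.2)
      (K ×ˢ closedBall (0 : EuclideanSpace ℝ (Fin k)) 1) := by
    intro p hp
    obtain ⟨hp1, hp2⟩ := mem_prod.1 hp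
    by_cases hz : p.2 = 0
    · -- continuity at zero via squeeze
      have hgp : g p.1 p.2 = 0 := by rw [hz]; exact g_zero g hgh p.1
      rw [ContinuousWithinAt, hgp]
      apply squeeze_zero_norm' (a := fun q : Euc N × EuclideanSpace ℝ (Fin k) => C * ‖q.2‖)
      · filter_upwards [self_mem_nhdsWithin] with q hq
        obtain ⟨hq1, hq2⟩ := mem_prod.1 hq
        by_cases hq0 : q.2 = 0
        · simp [hq0, g_zero g hgh q.1]
        · have hn : ‖q.2‖ ≠ 0 := norm_ne_zero_iff.mpr hq0
          have hunit : ‖‖q.2‖⁻¹ • q.2‖ = 1 := by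
            rw [norm_smul, norm_inv, norm_norm, inv_mul_cancel₀ hn]
          rw [Real.norm_eq_abs, g_homval g hgh q.1 q.2 hq0, abs_mul, abs_norm, mul_comm]
          exact mul_le_mul_of_nonneg_right (hC q.1 hq1 _ hunit) (norm_nonneg _)
      · have h2 : Tendsto (fun q : Euc N × EuclideanSpace ℝ (Fin k) => C * ‖q.2‖)
            (𝓝[K ×ˢ closedBall (0 : EuclideanSpace ℝ (Fin k)) 1] p) (𝓝 (C * ‖p.2‖)) :=
          ((continuous_const.mul (continuous_norm.comp continuous_snd)).continuousWithinAt)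
        simpa [hz] using h2
    · -- away from zero
      have hmem : {q : Euc N × EuclideanSpace ℝ (Fin k) | q.2 ≠ 0} ∈ 𝓝 p := by
        have hop : IsOpen {q : Euc N × EuclideanSpace ℝ (Fin k) | q.2 ≠ 0} :=
          isOpen_compl_iff.2 (isClosed_eq continuous_snd continuous_const)
        exact hop.mem_nhds hz
      rw [← continuousWithinAt_inter hmem]
      have heq : ∀ q ∈ (K ×ˢ closedBall (0 : EuclideanSpace ℝ (Fin k)) 1) ∩
          {q : Euc N × EuclideanSpace ℝ (Fin k) | q.2 ≠ 0},
          g q.1 q.2 = ‖q.2‖ * g q.1 (‖q.2‖⁻¹ • q.2) := fun q hq =>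
        g_homval g hgh q.1 q.2 hq.2
      apply ContinuousWithinAt.congr ?_ heq (g_homval g hgh p.1 p.2 hz)
      have hφ : ContinuousWithinAt
          (fun q : Euc N × EuclideanSpace ℝ (Fin k) => (q.1, ‖q.2‖⁻¹ • q.2))
          ((K ×ˢ closedBall (0 : EuclideanSpace ℝ (Fin k)) 1) ∩
            {q : Euc N × EuclideanSpace ℝ (Fin k) | q.2 ≠ 0}) p := by
        apply ContinuousAt.continuousWithinAt
        exact continuousAt_fst.prodMk
          (((continuous_norm.comp continuous_snd).continuousAt.inv₀
            (norm_ne_zero_iff.mpr hz)).smul continuousAt_snd)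
      have hmaps : MapsTo (fun q : Euc N × EuclideanSpace ℝ (Fin k) => (q.1, ‖q.2‖⁻¹ • q.2))
          ((K ×ˢ closedBall (0 : EuclideanSpace ℝ (Fin k)) 1) ∩
            {q : Euc N × EuclideanSpace ℝ (Fin k) | q.2 ≠ 0})
          (K ×ˢ Metric.sphere (0 : EuclideanSpace ℝ (Fin k)) 1) := by
        rintro q ⟨hq, hq0⟩
        obtain ⟨hq1, _⟩ := mem_prod.1 hq
        refine mem_prod.2 ⟨hq1, ?_⟩
        have hn : ‖q.2‖ ≠ 0 := norm_ne_zero_iff.mpr hq0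
        simp [mem_sphere_iff_norm, norm_smul, norm_inv, inv_mul_cancel₀ hn]
      have hgφ : ContinuousWithinAt
          (fun q : Euc N × EuclideanSpace ℝ (Fin k) => g q.1 (‖q.2‖⁻¹ • q.2))
          ((K ×ˢ closedBall (0 : EuclideanSpace ℝ (Fin k)) 1) ∩
            {q : Euc N × EuclideanSpace ℝ (Fin k) | q.2 ≠ 0}) p := by
        have hp' : (p.1, ‖p.2‖⁻¹ • p.2) ∈ K ×ˢ Metric.sphere (0 : EuclideanSpace ℝ (Fin k)) 1 := by
          refine mem_prod.2 ⟨hp1, ?_⟩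
          have hn : ‖p.2‖ ≠ 0 := norm_ne_zero_iff.mpr hz
          simp [mem_sphere_iff_norm, norm_smul, norm_inv, inv_mul_cancel₀ hn]
        have hc := ContinuousWithinAt.comp
            (g := fun p : Euc N × EuclideanSpace ℝ (Fin k) => g p.1 p.2)
            (f := fun q : Euc N × EuclideanSpace ℝ (Fin k) => (q.1, ‖q.2‖⁻¹ • q.2))
            (hgc _ hp') hφ hmaps
        exact hc
      exact ((continuous_norm.comp continuous_snd).continuousWithinAt).mul hgφ
  -- uniform continuity
  have hKB : IsCompact (K ×ˢ closedBall (0 : EuclideanSpace ℝ (Fin k)) 1) :=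
    hK.prod (isCompact_closedBall 0 1)
  have huc := hKB.uniformContinuousOn_of_continuous hcontB
  rw [Metric.uniformContinuousOn_iff] at huc
  obtain ⟨δ, hδ, hδ'⟩ := huc ε hε
  refine ⟨2 * C / δ, by positivity, ?_⟩
  intro x hx ξ η hξ hη
  have hmξ : (x, ξ) ∈ K ×ˢ closedBall (0 : EuclideanSpace ℝ (Fin k)) 1 :=
    mem_prod.2 ⟨hx, by simpa [mem_closedBall, dist_eq_norm] using hξ⟩
  have hmη : (x, η) ∈ K ×ˢ closedBall (0 : EuclideanSpace ℝ (Fin k)) 1 :=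
    mem_prod.2 ⟨hx, by simpa [mem_closedBall, dist_eq_norm] using hη⟩
  by_cases hd : ‖ξ - η‖ < δ
  · have := hδ' (x, ξ) hmξ (x, η) hmη (by
      rw [Prod.dist_eq]
      simpa [dist_eq_norm] using hd)
    have h1 : |g x ξ - g x η| < ε := by simpa [Real.dist_eq] using this
    nlinarith [norm_nonneg (ξ - η), mul_nonneg (by positivity : (0:ℝ) ≤ 2 * C / δ) (norm_nonneg (ξ - η))]
  · push_neg at hd
    have h1 : |g x ξ - g x η| ≤ 2 * C :=
      le_trans (abs_sub _ _) (by
        have := hCball x hx ξ hξ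
        have := hCball x hx η hη
        linarith)
    have h2 : 2 * C ≤ 2 * C / δ * ‖ξ - η‖ := by
      rw [div_mul_eq_mul_div, le_div_iff₀ hδ]
      exact mul_le_mul_of_nonneg_left hd (by positivity)
    linarith

lemma density_repr (π σ : Measure (Euc N)) [IsFiniteMeasure π] [IsFiniteMeasure σ]
    (hle : σ ≤ π) (ρ : Euc N → EuclideanSpace ℝ (Fin k))
    (hρm : AEStronglyMeasurable ρ σ) (hρ : ∀ᵐ x ∂σ, ‖ρ x‖ = 1)
    (g : Euc N → EuclideanSpace ℝ (Fin k) → ℝ)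
    (hgh : ∀ x : Euc N, ∀ α : ℝ, 0 ≤ α → ∀ ξ : EuclideanSpace ℝ (Fin k),
      g x (α • ξ) = α * g x ξ)
    (hgρ : Integrable (fun x => g x (ρ x)) σ) :
    ∃ a : Euc N → EuclideanSpace ℝ (Fin k), StronglyMeasurable a ∧
      (∀ᵐ x ∂π, ‖a x‖ ≤ 1) ∧ Integrable a π ∧
      ((∫ x, g x (ρ x) ∂σ) = ∫ x, g x (a x) ∂π) ∧
      Integrable (fun x => g x (a x)) π ∧
      (∀ A : Set (Euc N), MeasurableSet A → ∫ x in A, ρ x ∂σ = ∫ x in A, a x ∂π) := by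
  classical
  have hac : σ ≪ π := Measure.absolutelyContinuous_of_le hle
  set f0 : Euc N → ℝ≥0∞ := σ.rnDeriv π with hf0
  have hf0m : Measurable f0 := Measure.measurable_rnDeriv σ π
  have hf0le : f0 ≤ᵐ[π] 1 := Measure.rnDeriv_le_one_of_le hle
  set fn : Euc N → ℝ≥0 := fun x => (min (f0 x) 1).toNNReal with hfn
  have hfnm : Measurable fn := (hf0m.min measurable_const).ennreal_toNNReal
  have hfncoe : ∀ x, ((fn x : ℝ≥0∞)) = min (f0 x) 1 := fun x =>
    ENNReal.coe_toNNReal (ne_top_of_le_ne_top ENNReal.one_ne_top (min_le_right _ _))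
  have hfnle : ∀ x, (fn x : ℝ) ≤ 1 := by
    intro x
    have : (fn x : ℝ≥0∞) ≤ 1 := by rw [hfncoe]; exact min_le_right _ _
    exact_mod_cast this
  have hσd : σ = π.withDensity (fun x => (fn x : ℝ≥0∞)) := by
    haveI : σ.HaveLebesgueDecomposition π := Measure.haveLebesgueDecomposition_of_sigmaFinite σ π
    have h1 : π.withDensity f0 = σ := Measure.withDensity_rnDeriv_eq σ π hac
    have h2 : (fun x => (fn x : ℝ≥0∞)) =ᵐ[π] f0 := by
      filter_upwards [hf0le] with x hx
      rw [hfncoe x]; exact min_eq_left (by simpa using hx)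
    rw [← h1, withDensity_congr_ae h2]
  -- measurable version of ρ
  set ρ' : Euc N → EuclideanSpace ℝ (Fin k) := hρm.mk ρ with hρ'def
  have hρ'sm : StronglyMeasurable ρ' := hρm.stronglyMeasurable_mk
  have hρeq : ρ =ᵐ[σ] ρ' := hρm.ae_eq_mk
  have hρ'1 : ∀ᵐ x ∂σ, ‖ρ' x‖ = 1 := by
    filter_upwards [hρ, hρeq] with x h1 h2
    rw [← h2]; exact h1
  set a : Euc N → EuclideanSpace ℝ (Fin k) := fun x => (fn x : ℝ) • ρ' x with ha
  have hasm : StronglyMeasurable a :=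
    (hfnm.coe_nnreal_real.stronglyMeasurable).smul hρ'sm
  -- a.e. norm bound
  have hπ1 : ∀ᵐ x ∂π, (fn x : ℝ≥0∞) ≠ 0 → ‖ρ' x‖ = 1 := by
    have := hρ'1
    rw [hσd, ae_withDensity_iff (hfnm.coe_nnreal_ennreal)] at this
    exact this
  have hanorm : ∀ᵐ x ∂π, ‖a x‖ ≤ 1 := by
    filter_upwards [hπ1] with x hx
    by_cases h0 : fn x = 0
    · simp [ha, h0]
    · have h1 : ‖ρ' x‖ = 1 := hx (by exact_mod_cast h0)
      rw [ha]
      simp only [norm_smul, h1, mul_one, Real.norm_eq_abs, NNReal.abs_eq]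
      exact hfnle x
  have haint : Integrable a π := by
    refine Integrable.mono' (integrable_const (1 : ℝ)) hasm.aestronglyMeasurable ?_
    exact hanorm
  -- integral identity
  have hgae : (fun x => g x (ρ x)) =ᵐ[σ] fun x => g x (ρ' x) := by
    filter_upwards [hρeq] with x hx; rw [hx]
  have hkey : ∀ x, (fn x : ℝ) • g x (ρ' x) = g x (a x) := by
    intro x
    rw [ha]
    have := hgh x (fn x : ℝ) (fn x).coe_nonneg (ρ' x)
    rw [this]
    simp [smul_eq_mul]
  have hint_eq : (∫ x, g x (ρ x) ∂σ) = ∫ x, g x (a x) ∂π := by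
    rw [integral_congr_ae hgae, hσd, integral_withDensity_eq_integral_smul hfnm]
    exact integral_congr_ae (Eventually.of_forall fun x => by
      simpa [NNReal.smul_def] using hkey x)
  have hgint : Integrable (fun x => g x (a x)) π := by
    have h1 : Integrable (fun x => g x (ρ' x)) σ := hgρ.congr hgae
    rw [hσd, integrable_withDensity_iff_integrable_smul hfnm] at h1
    exact h1.congr (Eventually.of_forall fun x => by
      simpa [NNReal.smul_def] using hkey x)
  refine ⟨a, hasm, hanorm, haint, hint_eq, hgint, ?_⟩
  intro A hA
  have h1 : ∫ x in A, ρ x ∂σ = ∫ x in A, ρ' x ∂σ :=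
    integral_congr_ae (ae_restrict_of_ae hρeq)
  rw [h1, hσd, restrict_withDensity hA, integral_withDensity_eq_integral_smul hfnm]
  exact integral_congr_ae (Eventually.of_forall fun x => by simp [ha, NNReal.smul_def])

/-- A countable family of unit vectors whose unit balls cover the unit sphere. -/
lemma exists_unit_net (hk : 0 < k) :
    ∃ v : ℕ → EuclideanSpace ℝ (Fin k), (∀ i, ‖v i‖ = 1) ∧
      ∀ w : EuclideanSpace ℝ (Fin k), ‖w‖ = 1 → ∃ i, ‖w - v i‖ < 1 := by
  classical
  set E := EuclideanSpace ℝ (Fin k)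
  set e₀ : E := EuclideanSpace.single ⟨0, hk⟩ 1 with he₀
  have he₀n : ‖e₀‖ = 1 := by rw [he₀, EuclideanSpace.norm_single]; norm_num
  obtain ⟨u, hu⟩ := TopologicalSpace.exists_dense_seq E
  set v : ℕ → E := fun i => if h : u i = 0 then e₀ else ‖u i‖⁻¹ • u i with hv
  refine ⟨v, ?_, ?_⟩
  · intro i
    by_cases h : u i = 0
    · simp [hv, h, he₀n]
    · have hn : ‖u i‖ ≠ 0 := norm_ne_zero_iff.mpr h
      simp [hv, h, norm_smul, inv_mul_cancel₀ hn]
      rw [abs_of_nonneg (norm_nonneg _), inv_mul_cancel₀ hn]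
  · intro w hw
    obtain ⟨i, hi⟩ := Metric.denseRange_iff.1 hu w (1/4) (by norm_num)
    refine ⟨i, ?_⟩
    have hd : ‖w - u i‖ < 1/4 := by rwa [← dist_eq_norm]
    have hnu : |‖u i‖ - 1| < 1/4 := by
      have h1 : |‖u i‖ - ‖w‖| ≤ ‖u i - w‖ := abs_norm_sub_norm_le _ _
      rw [hw] at h1
      rw [norm_sub_rev] at hd
      exact lt_of_le_of_lt h1 hd
    have hu0 : u i ≠ 0 := by
      intro h0
      rw [h0, norm_zero] at hnu
      norm_num at hnu
    have hn : ‖u i‖ ≠ 0 := norm_ne_zero_iff.mpr hu0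
    have hvi : v i = ‖u i‖⁻¹ • u i := by simp [hv, hu0]
    have hvin : ‖v i‖ = 1 := by
      rw [hvi, norm_smul, norm_inv, norm_norm, inv_mul_cancel₀ hn]
    have h2 : ‖u i - v i‖ = |‖u i‖ - 1| := by
      have hdecomp : u i - v i = (‖u i‖ - 1) • v i := by
        rw [hvi, smul_smul]
        have hc : (‖u i‖ - 1) * ‖u i‖⁻¹ = 1 - ‖u i‖⁻¹ := by field_simp
        rw [hc, sub_smul, one_smul]
      rw [hdecomp, norm_smul, Real.norm_eq_abs, hvin, mul_one]
    calc ‖w - v i‖ ≤ ‖w - u i‖ + ‖u i - v i‖ := by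
          simpa using norm_sub_le_norm_sub_add_norm_sub w (u i) (v i)
      _ < 1/4 + 1/4 := by rw [h2]; exact add_lt_add hd hnu
      _ < 1 := by norm_num

lemma tv_lower (hk : 0 < k) (π : Measure (Euc N)) [IsFiniteMeasure π]
    (h : Euc N → EuclideanSpace ℝ (Fin k)) (hsm : StronglyMeasurable h)
    (hint : Integrable h π) (m : Set (Euc N) → EuclideanSpace ℝ (Fin k))
    (hm : ∀ A : Set (Euc N), MeasurableSet A → m A = ∫ x in A, h x ∂π) :
    ENNReal.ofReal ((∫ x, ‖h x‖ ∂π) / 2) ≤ setFnTV m := by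
  classical
  obtain ⟨v, hv1, hv2⟩ := exists_unit_net hk
  have hme : Measurable h := hsm.measurable
  have hunitm : Measurable (fun x => (‖h x‖)⁻¹ • h x) :=
    (hme.norm.inv).smul hme
  set c : ℕ → Set (Euc N) := fun i => {x | h x ≠ 0 ∧ ‖(‖h x‖)⁻¹ • h x - v i‖ < 1} with hc
  have hcm : ∀ i, MeasurableSet (c i) := by
    intro i
    have hceq : c i = (h ⁻¹' ({0}ᶜ)) ∩
        ((fun x => (‖h x‖)⁻¹ • h x) ⁻¹' Metric.ball (v i) 1) := by
      ext x; simp [hc, Metric.mem_ball, dist_eq_norm]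
    rw [hceq]
    exact (hme ((measurableSet_singleton 0).compl)).inter (hunitm measurableSet_ball)
  set P : ℕ → Set (Euc N) := disjointed c with hP
  have hPm : ∀ i, MeasurableSet (P i) := MeasurableSet.disjointed hcm
  have hPd : Pairwise (Function.onFun Disjoint P) := disjoint_disjointed c
  -- pointwise inner bound on P i
  have hpt : ∀ i, ∀ x ∈ P i, ‖h x‖ / 2 ≤ ⟪h x, v i⟫ := by
    intro i x hx
    have hx' : x ∈ c i := disjointed_subset c i hx
    obtain ⟨hx0, hxd⟩ := hx'
    have hn : ‖h x‖ ≠ 0 := norm_ne_zero_iff.mpr hx0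
    set w := (‖h x‖)⁻¹ • h x with hw
    have hwn : ‖w‖ = 1 := by rw [hw, norm_smul, norm_inv, norm_norm, inv_mul_cancel₀ hn]
    have hiw : (1 : ℝ) / 2 ≤ ⟪w, v i⟫ := by
      have hsq : ‖w - v i‖ ^ 2 = ‖w‖ ^ 2 - 2 * ⟪w, v i⟫ + ‖v i‖ ^ 2 := norm_sub_sq_real w (v i)
      have h1 : ‖w - v i‖ ^ 2 < 1 := by
        have := hxd
        nlinarith [norm_nonneg (w - v i)]
      rw [hwn, hv1 i] at hsq
      nlinarith
    have hrw : h x = ‖h x‖ • w := by rw [hw, smul_smul, mul_inv_cancel₀ hn, one_smul]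
    calc ‖h x‖ / 2 = ‖h x‖ * (1/2) := by ring
      _ ≤ ‖h x‖ * ⟪w, v i⟫ := mul_le_mul_of_nonneg_left hiw (norm_nonneg _)
      _ = ⟪h x, v i⟫ := by conv_rhs => rw [hrw, real_inner_smul_left]
  -- integral bound on each P i
  have hIi : ∀ i, ∫ x in P i, ‖h x‖ / 2 ∂π ≤ ‖m (P i)‖ := by
    intro i
    have hin : Integrable (fun x => ⟪h x, v i⟫) π := hint.inner_const (v i)
    have h1 : ∫ x in P i, ‖h x‖ / 2 ∂π ≤ ∫ x in P i, ⟪h x, v i⟫ ∂π := by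
      apply setIntegral_mono_on ((hint.norm.div_const 2).integrableOn)
        (hin.integrableOn) (hPm i)
      exact hpt i
    have h2 : ∫ x in P i, ⟪h x, v i⟫ ∂π = ⟪∫ x in P i, h x ∂π, v i⟫ := by
      rw [show (∫ x in P i, ⟪h x, v i⟫ ∂π) = ∫ x in P i, ⟪v i, h x⟫ ∂π from
        integral_congr_ae (Eventually.of_forall fun x => real_inner_comm _ _),
        integral_inner hint.integrableOn (v i), real_inner_comm]
    have h3 : ⟪∫ x in P i, h x ∂π, v i⟫ ≤ ‖∫ x in P i, h x ∂π‖ := by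
      calc ⟪∫ x in P i, h x ∂π, v i⟫ ≤ ‖∫ x in P i, h x ∂π‖ * ‖v i‖ := real_inner_le_norm _ _
        _ = ‖∫ x in P i, h x ∂π‖ := by rw [hv1 i, mul_one]
    rw [hm (P i) (hPm i)]
    calc ∫ x in P i, ‖h x‖ / 2 ∂π ≤ ⟪∫ x in P i, h x ∂π, v i⟫ := h1.trans (le_of_eq h2)
      _ ≤ ‖∫ x in P i, h x ∂π‖ := h3
  -- sum up
  have hcover : ∀ x, x ∉ (⋃ i, P i) → ‖h x‖ / 2 = 0 := by
    intro x hx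
    rw [iUnion_disjointed] at hx
    by_contra hne
    have hx0 : h x ≠ 0 := by
      intro h0; apply hne; rw [h0, norm_zero]; norm_num
    have hn : ‖h x‖ ≠ 0 := norm_ne_zero_iff.mpr hx0
    have hwu : ‖(‖h x‖)⁻¹ • h x‖ = 1 := by
      rw [norm_smul, norm_inv, norm_norm, inv_mul_cancel₀ hn]
    obtain ⟨i, hi⟩ := hv2 _ hwu
    exact hx (mem_iUnion.2 ⟨i, hx0, hi⟩)
  have hSum : HasSum (fun i => ∫ x in P i, ‖h x‖ / 2 ∂π) (∫ x in ⋃ i, P i, ‖h x‖ / 2 ∂π) :=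
    hasSum_integral_iUnion hPm hPd ((hint.norm.div_const 2).integrableOn)
  have hfull : (∫ x in ⋃ i, P i, ‖h x‖ / 2 ∂π) = ∫ x, ‖h x‖ / 2 ∂π :=
    setIntegral_eq_integral_of_forall_compl_eq_zero hcover
  have htsum : (∫ x, ‖h x‖ ∂π) / 2 = ∑' i, ∫ x in P i, ‖h x‖ / 2 ∂π := by
    rw [hSum.tsum_eq, hfull, integral_div]
  have hnn : ∀ i, 0 ≤ ∫ x in P i, ‖h x‖ / 2 ∂π := fun i =>
    integral_nonneg fun x => by positivity
  calc ENNReal.ofReal ((∫ x, ‖h x‖ ∂π) / 2)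
      = ∑' i, ENNReal.ofReal (∫ x in P i, ‖h x‖ / 2 ∂π) := by
        rw [htsum, ENNReal.ofReal_tsum_of_nonneg hnn hSum.summable]
    _ ≤ ∑' i, (‖m (P i)‖₊ : ℝ≥0∞) := by
        apply ENNReal.tsum_le_tsum
        intro i
        rw [← ENNReal.ofReal_coe_nnreal, coe_nnnorm]
        exact ENNReal.ofReal_le_ofReal (hIi i)
    _ ≤ setFnTV m := by
        unfold setFnTV
        exact le_iSup_of_le P (le_iSup_of_le hPm (le_iSup_of_le hPd le_rfl))

lemma main_est (hk : 0 < k) (Ω : Set (Euc N))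
    (g : Euc N → EuclideanSpace ℝ (Fin k) → ℝ)
    (hgh : ∀ x : Euc N, ∀ α : ℝ, 0 ≤ α → ∀ ξ : EuclideanSpace ℝ (Fin k),
      g x (α • ξ) = α * g x ξ)
    (σ τ : Measure (Euc N)) (ρ ϑ : Euc N → EuclideanSpace ℝ (Fin k))
    (hσf : σ Set.univ < ⊤) (hτf : τ Set.univ < ⊤)
    (hσs : σ Ωᶜ = 0) (hτs : τ Ωᶜ = 0)
    (hρ : ∀ᵐ x ∂σ, ‖ρ x‖ = 1) (hϑ : ∀ᵐ x ∂τ, ‖ϑ x‖ = 1)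
    (hρm : AEStronglyMeasurable ρ σ) (hϑm : AEStronglyMeasurable ϑ τ)
    (hgρ : Integrable (fun x => g x (ρ x)) σ)
    (hgϑ : Integrable (fun x => g x (ϑ x)) τ)
    (ε L : ℝ) (hε : 0 ≤ ε) (hL : 0 ≤ L)
    (hgL : ∀ x ∈ closure Ω, ∀ ξ η : EuclideanSpace ℝ (Fin k),
      ‖ξ‖ ≤ 1 → ‖η‖ ≤ 1 → |g x ξ - g x η| ≤ ε + L * ‖ξ - η‖)
    (T : ℝ≥0∞) (hT : T ≠ ⊤)
    (hTle : setFnTV (fun A : Set (Euc N) =>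
      (∫ x in A, ρ x ∂σ) - ∫ x in A, ϑ x ∂τ) ≤ T) :
    |(∫ x, g x (ρ x) ∂σ) - ∫ x, g x (ϑ x) ∂τ| ≤
      ε * (σ Set.univ + τ Set.univ).toReal + 2 * L * T.toReal := by
  classical
  have hσF : IsFiniteMeasure σ := ⟨hσf⟩
  have hτF : IsFiniteMeasure τ := ⟨hτf⟩
  set π : Measure (Euc N) := σ + τ with hπ
  have hπF : IsFiniteMeasure π := by
    constructor
    rw [hπ, Measure.add_apply]
    exact ENNReal.add_lt_top.2 ⟨hσf, hτf⟩
  have hσle : σ ≤ π := Measure.le_add_right le_rfl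
  have hτle : τ ≤ π := Measure.le_add_left le_rfl
  obtain ⟨a, hasm, hanorm, haint, haeq, hagint, haset⟩ :=
    density_repr π σ hσle ρ hρm hρ g hgh hgρ
  obtain ⟨b, hbsm, hbnorm, hbint, hbeq, hbgint, hbset⟩ :=
    density_repr π τ hτle ϑ hϑm hϑ g hgh hgϑ
  set h : Euc N → EuclideanSpace ℝ (Fin k) := fun x => a x - b x with hh
  have hhsm : StronglyMeasurable h := hasm.sub hbsm
  have hhint : Integrable h π := haint.sub hbint
  have hmrep : ∀ A : Set (Euc N), MeasurableSet A →
      ((∫ x in A, ρ x ∂σ) - ∫ x in A, ϑ x ∂τ) = ∫ x in A, h x ∂π := by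
    intro A hA
    rw [haset A hA, hbset A hA, ← integral_sub haint.integrableOn hbint.integrableOn]
  have htv := tv_lower hk π h hhsm hhint _ hmrep
  have hTV2 : (∫ x, ‖h x‖ ∂π) / 2 ≤ T.toReal := by
    have := le_trans htv hTle
    exact (ENNReal.ofReal_le_iff_le_toReal hT).1 this
  -- a.e. membership in Ω
  have hπΩ : ∀ᵐ x ∂π, x ∈ Ω := by
    rw [ae_iff]
    have : {x | ¬ x ∈ Ω} = Ωᶜ := rfl
    rw [this, hπ, Measure.add_apply, hσs, hτs, add_zero]
  -- main bound
  have hptwise : ∀ᵐ x ∂π, |g x (a x) - g x (b x)| ≤ ε + L * ‖h x‖ := by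
    filter_upwards [hπΩ, hanorm, hbnorm] with x hxΩ hxa hxb
    exact hgL x (subset_closure hxΩ) (a x) (b x) hxa hxb
  have hdiff_int : Integrable (fun x => |g x (a x) - g x (b x)|) π :=
    (hagint.sub hbgint).abs
  have hLn : Integrable (fun x => L * ‖h x‖) π := by exact hhint.norm.const_mul L
  have hrhs_int : Integrable (fun x => ε + L * ‖h x‖) π :=
    (integrable_const ε).add hLn
  have hb1 : |(∫ x, g x (ρ x) ∂σ) - ∫ x, g x (ϑ x) ∂τ| ≤ ∫ x, |g x (a x) - g x (b x)| ∂π := by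
    rw [haeq, hbeq, ← integral_sub hagint hbgint]
    have hni := norm_integral_le_integral_norm (μ := π) (fun x => g x (a x) - g x (b x))
    simpa [Real.norm_eq_abs] using hni
  have hb2 : ∫ x, |g x (a x) - g x (b x)| ∂π ≤ ∫ x, (ε + L * ‖h x‖) ∂π :=
    integral_mono_ae hdiff_int hrhs_int hptwise
  have hb3 : ∫ x, (ε + L * ‖h x‖) ∂π = ε * (π Set.univ).toReal + L * ∫ x, ‖h x‖ ∂π := by
    rw [integral_add (integrable_const ε) hLn, integral_const, integral_const_mul]
    simp [smul_eq_mul, mul_comm, measureReal_def]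
  have hb4 : L * ∫ x, ‖h x‖ ∂π ≤ 2 * L * T.toReal := by
    have h2 : ∫ x, ‖h x‖ ∂π ≤ 2 * T.toReal := by linarith
    calc L * ∫ x, ‖h x‖ ∂π ≤ L * (2 * T.toReal) := by
          apply mul_le_mul_of_nonneg_left h2 hL
      _ = 2 * L * T.toReal := by ring
  have hπuniv : (π Set.univ).toReal = (σ Set.univ + τ Set.univ).toReal := by
    rw [hπ, Measure.add_apply]
  calc |(∫ x, g x (ρ x) ∂σ) - ∫ x, g x (ϑ x) ∂τ|
      ≤ ∫ x, (ε + L * ‖h x‖) ∂π := hb1.trans hb2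
    _ = ε * (π Set.univ).toReal + L * ∫ x, ‖h x‖ ∂π := hb3
    _ ≤ ε * (σ Set.univ + τ Set.univ).toReal + 2 * L * T.toReal := by
        rw [hπuniv]; linarith

end Aux

theorem stmt12 {N k : ℕ} (hN : 0 < N) (hk : 0 < k) (Ω : Set (Euc N))
    (hΩo : IsOpen Ω) (hΩb : Bornology.IsBounded Ω)
    (g : Euc N → EuclideanSpace ℝ (Fin k) → ℝ)
    (hgc : ContinuousOn (fun p : Euc N × EuclideanSpace ℝ (Fin k) => g p.1 p.2)
      ((closure Ω) ×ˢ Metric.sphere (0 : EuclideanSpace ℝ (Fin k)) 1))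
    (hgh : ∀ x : Euc N, ∀ α : ℝ, 0 ≤ α → ∀ ξ : EuclideanSpace ℝ (Fin k),
      g x (α • ξ) = α * g x ξ)
    (σ τ : ℕ → Measure (Euc N)) (ρ ϑ : ℕ → Euc N → EuclideanSpace ℝ (Fin k))
    (hσf : ∀ n, σ n Set.univ < ⊤) (hτf : ∀ n, τ n Set.univ < ⊤)
    (hσs : ∀ n, σ n Ωᶜ = 0) (hτs : ∀ n, τ n Ωᶜ = 0)
    (hρ : ∀ n, ∀ᵐ x ∂(σ n), ‖ρ n x‖ = 1) (hϑ : ∀ n, ∀ᵐ x ∂(τ n), ‖ϑ n x‖ = 1)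
    (hρm : ∀ n, AEStronglyMeasurable (ρ n) (σ n))
    (hϑm : ∀ n, AEStronglyMeasurable (ϑ n) (τ n))
    (hgρ : ∀ n, Integrable (fun x => g x (ρ n x)) (σ n))
    (hgϑ : ∀ n, Integrable (fun x => g x (ϑ n x)) (τ n))
    (hbdd : ∃ R : ℝ≥0∞, R < ⊤ ∧ ∀ n, σ n Set.univ ≤ R ∧ τ n Set.univ ≤ R)
    (hTV : Tendsto (fun n => setFnTV (fun A : Set (Euc N) =>
      (∫ x in A, ρ n x ∂(σ n)) - ∫ x in A, ϑ n x ∂(τ n))) atTop (𝓝 (0 : ℝ≥0∞))) :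
    Tendsto (fun n => (∫ x, g x (ρ n x) ∂(σ n)) - ∫ x, g x (ϑ n x) ∂(τ n)) atTop
      (𝓝 (0 : ℝ)) := by
  rw [NormedAddCommGroup.tendsto_nhds_zero]
  intro ε' hε'
  obtain ⟨R, hRlt, hR⟩ := hbdd
  set R' := R.toReal with hR'def
  have hR'0 : 0 ≤ R' := ENNReal.toReal_nonneg
  have hεg : 0 < ε' / (2 * (2 * R' + 1)) := by positivity
  obtain ⟨L, hL0, hL⟩ := g_unif Ω hΩb g hgc hgh hεg
  set T : ℕ → ℝ≥0∞ := fun n => setFnTV (fun A : Set (Euc N) =>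
    (∫ x in A, ρ n x ∂(σ n)) - ∫ x in A, ϑ n x ∂(τ n)) with hTdef
  have hTr : Tendsto (fun n => (T n).toReal) atTop (𝓝 0) := by
    have h0 := (ENNReal.tendsto_toReal (a := 0) (by simp)).comp hTV
    exact h0
  have hev1 : ∀ᶠ n in atTop, T n < ⊤ :=
    hTV.eventually_lt_const (by simp : (0 : ℝ≥0∞) < ⊤)
  have hev2 : ∀ᶠ n in atTop, (T n).toReal < (ε' / 2) / (2 * L + 1) :=
    hTr.eventually_lt_const (by positivity)
  filter_upwards [hev1, hev2] with n h1 h2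
  have key := main_est hk Ω g hgh (σ n) (τ n) (ρ n) (ϑ n) (hσf n) (hτf n)
    (hσs n) (hτs n) (hρ n) (hϑ n) (hρm n) (hϑm n) (hgρ n) (hgϑ n)
    (ε' / (2 * (2 * R' + 1))) L hεg.le hL0 (hL) (T n) h1.ne le_rfl
  set t := (T n).toReal with htdef
  have ht0 : 0 ≤ t := ENNReal.toReal_nonneg
  set S := (σ n Set.univ + τ n Set.univ).toReal with hSdef
  have hS0 : 0 ≤ S := ENNReal.toReal_nonneg
  have hSle : S ≤ 2 * R' := by
    have hadd : σ n Set.univ + τ n Set.univ ≤ R + R :=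
      add_le_add (hR n).1 (hR n).2
    have := ENNReal.toReal_mono (by
      exact ENNReal.add_ne_top.2 ⟨hRlt.ne, hRlt.ne⟩) hadd
    rw [ENNReal.toReal_add hRlt.ne hRlt.ne] at this
    rw [hSdef]; linarith
  have hfirst : ε' / (2 * (2 * R' + 1)) * S < ε' / 2 := by
    have h3 : ε' / (2 * (2 * R' + 1)) * S ≤ ε' / (2 * (2 * R' + 1)) * (2 * R') :=
      mul_le_mul_of_nonneg_left hSle hεg.le
    have h4 : ε' / (2 * (2 * R' + 1)) * (2 * R') < ε' / 2 := by
      rw [div_mul_eq_mul_div, div_lt_div_iff₀ (by positivity) (by norm_num)]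
      nlinarith
    linarith
  have hsecond : 2 * L * t ≤ ε' / 2 := by
    have h3 : 2 * L * t ≤ 2 * L * ((ε' / 2) / (2 * L + 1)) :=
      mul_le_mul_of_nonneg_left h2.le (by positivity)
    have h4 : 2 * L * ((ε' / 2) / (2 * L + 1)) ≤ ε' / 2 := by
      rw [mul_comm, div_mul_eq_mul_div, div_le_iff₀ (by positivity)]
      nlinarith
    linarith
  rw [Real.norm_eq_abs]
  calc |(∫ x, g x (ρ n x) ∂(σ n)) - ∫ x, g x (ϑ n x) ∂(τ n)|
      ≤ ε' / (2 * (2 * R' + 1)) * S + 2 * L * t := key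
    _ < ε' / 2 + ε' / 2 := by
        apply add_lt_add_of_lt_of_le hfirst hsecond
    _ = ε' := by ring


end
end
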